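/- Under the setting of Algorithm 1, the output D^p = σ₁²·1 + σ²·1 − D₁ᵈ − 2D₂ᵈ + D₃ᵈ − D_ℓ, where D₁ᵈ, D₂ᵈ, D₃ᵈ are deterministic and D_ℓ is the unbiased stochastic estimate of diag((Σ_{nn_p}^s)ᵀ Σ̃_s⁻¹ Σ_{nn_p}^s), is an unbiased and consistent estimator of the FSA predictive variance vector diag(Σ^p_†) = σ₁²·1 + σ²·1 − diag((Σ_{nn_p}^†)ᵀ Σ̃_†⁻¹ Σ_{nn_p}^†). -/

import Mathlib

/-! Write the FSA cross-covariance as `A + Snnp` with `A = Smnᵀ Sm⁻¹ Smnp`. Since `Σ̃_†⁻¹` is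
symmetric, the diagonal of `(A + Snnp)ᵀ Σ̃_†⁻¹ (A + Snnp)` is `D₁ᵈ + 2 D₂ᵈ` plus the diagonal of
`Snnpᵀ Σ̃_†⁻¹ Snnp`, and Sherman–Woodbury–Morrison turns the latter into
`diag(Snnpᵀ Ss⁻¹ Snnp) - D₃ᵈ`. So `D^p` differs from the target only in that `D_ℓ` replaces
`diag B`, `B = Snnpᵀ Ss⁻¹ Snnp`. A Rademacher vector `z` with independent coordinates has
`E[z zᵀ] = 1`, so every summand `z_j (B z)_j` of Hutchinson's estimator `D_ℓ` has mean `B j j`;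
the probe vectors are i.i.d., so linearity gives unbiasedness and the strong law of large numbers
gives almost sure convergence. -/

open Matrix MeasureTheory ProbabilityTheory Filter

namespace Matrix

variable {n m p : Type*}

lemma diag_transpose_add_mul_mul_add {R : Type*} [CommRing R] [Fintype n] {P : Matrix n n R}
    (hP : P.IsSymm) (A S : Matrix n p R) (j : p) :
    ((A + S)ᵀ * P * (A + S)) j j
      = (Aᵀ * P * A) j j + 2 * (Sᵀ * P * A) j j + (Sᵀ * P * S) j j := by
  have hcross : (Aᵀ * P * S) j j = (Sᵀ * P * A) j j := by
    rw [← transpose_apply (Aᵀ * P * S), transpose_mul, transpose_mul, hP.eq,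
      transpose_transpose, Matrix.mul_assoc]
  simp only [transpose_add, Matrix.add_mul, Matrix.mul_add, add_apply, hcross]
  ring

lemma PosDef.transpose_eq {A : Matrix n n ℝ} (hA : A.PosDef) : Aᵀ = A :=
  (isHermitian_iff_isSymm.mp hA.isHermitian).eq

lemma PosDef.add_transpose_mul_mul [Fintype n] [Fintype m] {A : Matrix n n ℝ}
    {C : Matrix m m ℝ} (hA : A.PosDef) (hC : C.PosSemidef) (U : Matrix m n ℝ) :
    (A + Uᵀ * C * U).PosDef :=
  hA.add_posSemidef (by simpa using hC.conjTranspose_mul_mul_same U)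

lemma PosDef.inv_add_transpose_mul_inv_mul [Fintype n] [Fintype m] [DecidableEq n]
    [DecidableEq m] {A : Matrix n n ℝ} {C : Matrix m m ℝ} (hA : A.PosDef) (hC : C.PosDef)
    (U : Matrix m n ℝ) :
    (A + Uᵀ * C⁻¹ * U)⁻¹ = A⁻¹ - A⁻¹ * Uᵀ * (C + U * A⁻¹ * Uᵀ)⁻¹ * U * A⁻¹ := by
  have hCC : C⁻¹⁻¹ = C := nonsing_inv_nonsing_inv _ ((isUnit_iff_isUnit_det _).1 hC.isUnit)
  have hM : (C + U * A⁻¹ * Uᵀ).PosDef := by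
    simpa using hC.add_transpose_mul_mul hA.inv.posSemidef Uᵀ
  rw [add_mul_mul_inv_eq_sub _ _ _ _ hA.isUnit hC.inv.isUnit (by rw [hCC]; exact hM.isUnit), hCC]

lemma woodbury_diag_decomposition [Fintype n] [Fintype m] [DecidableEq n] [DecidableEq m]
    {Ss : Matrix n n ℝ} {Sm : Matrix m m ℝ} (hSs : Ss.PosDef) (hSm : Sm.PosDef)
    (Smn : Matrix m n ℝ) (Smnp : Matrix m p ℝ) (Snnp : Matrix n p ℝ) (j : p) :
    ((Smnᵀ * Sm⁻¹ * Smnp + Snnp)ᵀ * (Ss + Smnᵀ * Sm⁻¹ * Smn)⁻¹ *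
        (Smnᵀ * Sm⁻¹ * Smnp + Snnp)) j j
      = (Smnpᵀ * Sm⁻¹ * Smn * (Ss + Smnᵀ * Sm⁻¹ * Smn)⁻¹ * Smnᵀ * Sm⁻¹ * Smnp) j j
        + 2 * (Snnpᵀ * (Ss + Smnᵀ * Sm⁻¹ * Smn)⁻¹ * Smnᵀ * Sm⁻¹ * Smnp) j j
        - (Snnpᵀ * Ss⁻¹ * Smnᵀ * (Sm + Smn * Ss⁻¹ * Smnᵀ)⁻¹ * Smn * Ss⁻¹ * Snnp) j j
        + (Snnpᵀ * Ss⁻¹ * Snnp) j j := by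
  have hP : (Ss + Smnᵀ * Sm⁻¹ * Smn)⁻¹.IsSymm :=
    (hSs.add_transpose_mul_mul hSm.inv.posSemidef Smn).inv.transpose_eq
  rw [diag_transpose_add_mul_mul_add hP, hSs.inv_add_transpose_mul_inv_mul hSm Smn]
  simp only [transpose_mul, transpose_transpose, hSm.inv.transpose_eq, Matrix.mul_sub,
    Matrix.sub_mul, Matrix.mul_assoc, sub_apply]
  ring

end Matrix

open scoped ENNReal

namespace ProbabilityTheory

noncomputable def rademacher : Measure ℝ :=
  (2⁻¹ : ℝ≥0∞) • Measure.dirac 1 + (2⁻¹ : ℝ≥0∞) • Measure.dirac (-1)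

instance : IsProbabilityMeasure rademacher :=
  ⟨by simp [rademacher, ENNReal.inv_two_add_inv_two]⟩

lemma ae_rademacher : ∀ᵐ x ∂rademacher, x = 1 ∨ x = -1 := by
  simp [rademacher]

lemma integral_rademacher : ∫ x, x ∂rademacher = 0 := by
  rw [rademacher, integral_add_measure ((integrable_dirac (by simp)).smul_measure (by simp))
    ((integrable_dirac (by simp)).smul_measure (by simp))]
  simp

variable {Ω : Type*} [MeasurableSpace Ω] {μ : Measure Ω}

lemma hasLaw_rademacher [IsProbabilityMeasure μ] {W : Ω → ℝ} (hW : Measurable W)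
    (h1 : μ {ω | W ω = 1} = 1 / 2) (h2 : μ {ω | W ω = -1} = 1 / 2) :
    HasLaw W rademacher μ where
  aemeasurable := hW.aemeasurable
  map_eq := by
    have hdisj : Disjoint ({1} : Set ℝ) {-1} := by norm_num
    have hν1 : μ.map W {1} = 2⁻¹ := by
      rw [Measure.map_apply hW (measurableSet_singleton 1), ← one_div, ← h1]; rfl
    have hν2 : μ.map W {-1} = 2⁻¹ := by
      rw [Measure.map_apply hW (measurableSet_singleton _), ← one_div, ← h2]; rfl
    have := Measure.isProbabilityMeasure_map (μ := μ) hW.aemeasurable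
    have hsupp : ∀ᵐ x ∂μ.map W, x ∈ ({1} ∪ {-1} : Set ℝ) := by
      rw [ae_mem_iff_measure_eq (by measurability), measure_union hdisj (measurableSet_singleton _),
        hν1, hν2, ENNReal.inv_two_add_inv_two, measure_univ]
    rw [← Measure.restrict_eq_self_of_ae_mem hsupp, Measure.restrict_union hdisj
      (measurableSet_singleton _), Measure.restrict_singleton, Measure.restrict_singleton,
      hν1, hν2, rademacher]

lemma HasLaw.ae_eq_one_or_neg_one {W : Ω → ℝ} (hW : HasLaw W rademacher μ) :
    ∀ᵐ ω ∂μ, W ω = 1 ∨ W ω = -1 :=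
  ae_of_ae_map hW.aemeasurable (hW.map_eq ▸ ae_rademacher)

lemma HasLaw.integral_eq_zero {W : Ω → ℝ} (hW : HasLaw W rademacher μ) : ∫ ω, W ω ∂μ = 0 := by
  rw [hW.integral_eq, integral_rademacher]

lemma integrable_mul_of_hasLaw_rademacher [IsProbabilityMeasure μ] {X Y : Ω → ℝ}
    (hX : HasLaw X rademacher μ) (hY : HasLaw Y rademacher μ) :
    Integrable (fun ω => X ω * Y ω) μ := by
  refine .of_bound (hX.aemeasurable.mul hY.aemeasurable).aestronglyMeasurable 1 ?_
  filter_upwards [hX.ae_eq_one_or_neg_one, hY.ae_eq_one_or_neg_one] with ω hXω hYω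
  rcases hXω with h | h <;> rcases hYω with h' | h' <;> simp [h, h']

section RademacherVector

variable {ι : Type*}

lemma integral_mul_of_iIndepFun_rademacher [DecidableEq ι] {v : Ω → ι → ℝ}
    (hind : iIndepFun (fun k ω => v ω k) μ) (hlaw : ∀ k, HasLaw (fun ω => v ω k) rademacher μ)
    (i j : ι) : ∫ ω, v ω i * v ω j ∂μ = (1 : Matrix ι ι ℝ) i j := by
  rcases eq_or_ne i j with rfl | hij
  · have hsq : (fun ω => v ω i * v ω i) =ᵐ[μ] fun _ => 1 := by
      filter_upwards [(hlaw i).ae_eq_one_or_neg_one] with ω h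
      rcases h with h | h <;> simp [h]
    have := (hlaw i).isProbabilityMeasure
    simp [integral_congr_ae hsq]
  · rw [(hind.indepFun hij).integral_fun_mul_eq_mul_integral
      (hlaw i).aemeasurable.aestronglyMeasurable (hlaw j).aemeasurable.aestronglyMeasurable,
      (hlaw i).integral_eq_zero, zero_mul, one_apply_ne hij]

lemma integrable_mul_mulVec_apply [Fintype ι] [IsProbabilityMeasure μ] {v : Ω → ι → ℝ}
    (hlaw : ∀ k, HasLaw (fun ω => v ω k) rademacher μ) (B : Matrix ι ι ℝ) (j : ι) :
    Integrable (fun ω => v ω j * (B *ᵥ v ω) j) μ := by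
  simp only [mulVec, dotProduct, Finset.mul_sum]
  exact integrable_finsetSum _ fun k _ =>
    (integrable_mul_of_hasLaw_rademacher (hlaw j) (hlaw k)).const_mul (B j k) |>.congr
      (.of_forall fun ω => by ring)

lemma integral_mul_mulVec_apply [Fintype ι] [DecidableEq ι] {v : Ω → ι → ℝ}
    (hind : iIndepFun (fun k ω => v ω k) μ) (hlaw : ∀ k, HasLaw (fun ω => v ω k) rademacher μ)
    (B : Matrix ι ι ℝ) (j : ι) : ∫ ω, v ω j * (B *ᵥ v ω) j ∂μ = B j j := by
  have := hind.isProbabilityMeasure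
  have hexpand : (fun ω => v ω j * (B *ᵥ v ω) j) = fun ω => ∑ k, B j k * (v ω k * v ω j) := by
    funext ω
    simp only [mulVec, dotProduct, Finset.mul_sum]
    exact Finset.sum_congr rfl fun k _ => by ring
  rw [hexpand, integral_finsetSum _ fun k _ =>
    (integrable_mul_of_hasLaw_rademacher (hlaw k) (hlaw j)).const_mul _]
  simp only [integral_const_mul, integral_mul_of_iIndepFun_rademacher hind hlaw]
  rw [← mul_apply, Matrix.mul_one]

lemma iIndepFun.hasLaw_pi_rademacher [Fintype ι] [IsProbabilityMeasure μ] {v : Ω → ι → ℝ}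
    (hind : iIndepFun (fun k ω => v ω k) μ) (hlaw : ∀ k, HasLaw (fun ω => v ω k) rademacher μ) :
    HasLaw v (Measure.pi fun _ => rademacher) μ where
  aemeasurable := aemeasurable_pi_lambda _ fun k => (hlaw k).aemeasurable
  map_eq := by
    rw [← funext fun k => (hlaw k).map_eq]
    exact (iIndepFun_iff_map_fun_eq_pi_map fun k => (hlaw k).aemeasurable).1 hind

variable {κ β : Type*} [MeasurableSpace β] {z : κ → Ω → ι → β}

lemma iIndepFun.row (h : iIndepFun (fun p : κ × ι => fun ω => z p.1 ω p.2) μ) (i : κ) :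
    iIndepFun (fun k ω => z i ω k) μ :=
  h.precomp (Function.Embedding.sectR i ι).injective

lemma iIndepFun.indepFun_rows [Fintype ι]
    (h : iIndepFun (fun p : κ × ι => fun ω => z p.1 ω p.2) μ)
    (hz : ∀ i, Measurable (z i)) {i i' : κ} (hii' : i ≠ i') : IndepFun (z i) (z i') μ := by
  classical
  let row (a : κ) : Finset (κ × ι) := Finset.univ.map (Function.Embedding.sectR a ι)
  have mem_row {a : κ} {p : κ × ι} : p ∈ row a ↔ p.1 = a := by
    obtain ⟨b, k⟩ := p
    simp only [row, Finset.mem_map, Finset.mem_univ, true_and, Function.Embedding.sectR_apply,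
      Prod.mk.injEq]
    exact ⟨fun ⟨_, hb, _⟩ => hb.symm, fun hb => ⟨k, hb.symm, rfl⟩⟩
  have hdisj : Disjoint (row i) (row i') :=
    Finset.disjoint_left.2 fun p hp hp' => hii' ((mem_row.1 hp).symm.trans (mem_row.1 hp'))
  let unrow (a : κ) (w : row a → β) (k : ι) : β := w ⟨(a, k), mem_row.2 rfl⟩
  have hunrow (a : κ) : Measurable (unrow a) :=
    measurable_pi_lambda _ fun _ => measurable_pi_apply _
  exact (h.indepFun_finset (row i) (row i') hdisj fun p => (measurable_pi_apply p.2).comp (hz p.1))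
    |>.comp (hunrow i) (hunrow i')

end RademacherVector

noncomputable def hutchinsonDiag {ι : Type*} [Fintype ι] (B : Matrix ι ι ℝ)
    (z : ℕ → Ω → ι → ℝ) (ℓ : ℕ) (ω : Ω) (j : ι) : ℝ :=
  (ℓ : ℝ)⁻¹ * ∑ i ∈ Finset.range ℓ, z i ω j * (B *ᵥ z i ω) j

section HutchinsonDiag

variable {ι : Type*} [Fintype ι] {z : ℕ → Ω → ι → ℝ}

lemma integrable_hutchinsonDiag [IsProbabilityMeasure μ]
    (hlaw : ∀ i k, HasLaw (fun ω => z i ω k) rademacher μ) (B : Matrix ι ι ℝ) (ℓ : ℕ) (j : ι) :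
    Integrable (fun ω => hutchinsonDiag B z ℓ ω j) μ :=
  (integrable_finsetSum _ fun i _ => integrable_mul_mulVec_apply (hlaw i) B j).const_mul _

lemma integral_hutchinsonDiag [DecidableEq ι]
    (hind : iIndepFun (fun p : ℕ × ι => fun ω => z p.1 ω p.2) μ)
    (hlaw : ∀ i k, HasLaw (fun ω => z i ω k) rademacher μ) (B : Matrix ι ι ℝ) {ℓ : ℕ}
    (hℓ : ℓ ≠ 0) (j : ι) : ∫ ω, hutchinsonDiag B z ℓ ω j ∂μ = B j j := by
  have := hind.isProbabilityMeasure
  simp only [hutchinsonDiag]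
  rw [integral_const_mul, integral_finsetSum _ fun i _ => integrable_mul_mulVec_apply (hlaw i) B j]
  simp only [integral_mul_mulVec_apply (hind.row _) (hlaw _), Finset.sum_const,
    Finset.card_range, nsmul_eq_mul]
  field_simp

lemma ae_tendsto_hutchinsonDiag [DecidableEq ι] (hz : ∀ i, Measurable (z i))
    (hind : iIndepFun (fun p : ℕ × ι => fun ω => z p.1 ω p.2) μ)
    (hlaw : ∀ i k, HasLaw (fun ω => z i ω k) rademacher μ) (B : Matrix ι ι ℝ) :
    ∀ᵐ ω ∂μ, ∀ j, Tendsto (fun ℓ => hutchinsonDiag B z ℓ ω j) atTop (nhds (B j j)) := by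
  have := hind.isProbabilityMeasure
  rw [ae_all_iff]
  intro j
  let q (v : ι → ℝ) : ℝ := v j * (B *ᵥ v) j
  have hq : Measurable q := by fun_prop
  have hident (i : ℕ) : IdentDistrib (z i) (z 0) μ μ :=
    ⟨(hz i).aemeasurable, (hz 0).aemeasurable, by
      rw [((hind.row i).hasLaw_pi_rademacher (hlaw i)).map_eq,
        ((hind.row 0).hasLaw_pi_rademacher (hlaw 0)).map_eq]⟩
  have hslln := strong_law_ae_real (fun i => q ∘ z i) (integrable_mul_mulVec_apply (hlaw 0) B j)
    (fun i i' hii' => (hind.indepFun_rows hz hii').comp hq hq) fun i => (hident i).comp hq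
  filter_upwards [hslln] with ω hω
  rw [show μ[q ∘ z 0] = B j j from integral_mul_mulVec_apply (hind.row 0) (hlaw 0) B j] at hω
  simp only [div_eq_inv_mul] at hω
  exact hω

end HutchinsonDiag

end ProbabilityTheory

/-- Proposition 1: Algorithm 1 produces unbiased and consistent estimates of the
FSA predictive variances. With `Ss = Σ̃_s` (positive definite), `Sm = Σ_m`
(positive definite), cross-covariances `Smn`, `Smnp`, `Snnp = Σˢ_{n n_p}`, the
FSA training covariance `Σ̃_† = Ss + Smnᵀ Sm⁻¹ Smn`, the FSA cross-covariance
`Σ†_{n n_p} = Smnᵀ Sm⁻¹ Smnp + Snnp`, deterministic diagonals `D₁ᵈ, D₂ᵈ, D₃ᵈ` and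
the stochastic diagonal estimate `D_ℓ` of `diag(Snnpᵀ Ss⁻¹ Snnp)` computed with
i.i.d. Rademacher probe vectors `z`, the output
`D^p = σ₁²·1 + σ²·1 − D₁ᵈ − 2D₂ᵈ + D₃ᵈ − D_ℓ` has expectation equal to the
predictive variance `diag(Σ^p_†) = σ₁²·1 + σ²·1 − diag((Σ†_{n n_p})ᵀ Σ̃_†⁻¹ Σ†_{n n_p})`
and converges to it almost surely as `ℓ → ∞`. -/
theorem stmt14 {n np m : ℕ} {Ω : Type*} [MeasurableSpace Ω]
    (μ : Measure Ω) [IsProbabilityMeasure μ]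
    (Ss : Matrix (Fin n) (Fin n) ℝ) (Sm : Matrix (Fin m) (Fin m) ℝ)
    (Smn : Matrix (Fin m) (Fin n) ℝ) (Smnp : Matrix (Fin m) (Fin np) ℝ)
    (Snnp : Matrix (Fin n) (Fin np) ℝ) (σ1sq σsq : ℝ)
    (hSs : Ss.PosDef) (hSm : Sm.PosDef)
    (z : ℕ → Ω → Fin np → ℝ)
    (hmeas : ∀ i, Measurable (z i))
    (hindep : iIndepFun
      (fun (p : ℕ × Fin np) ω => z p.1 ω p.2) μ)
    (hdist : ∀ i j, μ {ω | z i ω j = 1} = 1 / 2 ∧ μ {ω | z i ω j = -1} = 1 / 2) :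
    let SigDag := Ss + Smnᵀ * Sm⁻¹ * Smn
    let Cross := Smnᵀ * Sm⁻¹ * Smnp + Snnp
    let Mmat := Sm + Smn * Ss⁻¹ * Smnᵀ
    let B := Snnpᵀ * Ss⁻¹ * Snnp
    let D1 : Fin np → ℝ := fun j => (Smnpᵀ * Sm⁻¹ * Smn * SigDag⁻¹ * Smnᵀ * Sm⁻¹ * Smnp) j j
    let D2 : Fin np → ℝ := fun j => (Snnpᵀ * SigDag⁻¹ * Smnᵀ * Sm⁻¹ * Smnp) j j
    let D3 : Fin np → ℝ := fun j => (Snnpᵀ * Ss⁻¹ * Smnᵀ * Mmat⁻¹ * Smn * Ss⁻¹ * Snnp) j j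
    let Dl : ℕ → Ω → Fin np → ℝ := fun ℓ ω j =>
      (ℓ : ℝ)⁻¹ * ∑ i ∈ Finset.range ℓ, z i ω j * (B.mulVec (z i ω)) j
    let Dp : ℕ → Ω → Fin np → ℝ := fun ℓ ω j =>
      σ1sq + σsq - D1 j - 2 * D2 j + D3 j - Dl ℓ ω j
    let target : Fin np → ℝ := fun j => σ1sq + σsq - (Crossᵀ * SigDag⁻¹ * Cross) j j
    (∀ ℓ : ℕ, 0 < ℓ → ∀ j, ∫ ω, Dp ℓ ω j ∂μ = target j) ∧
      ∀ᵐ ω ∂μ, ∀ j, Tendsto (fun ℓ : ℕ => Dp ℓ ω j) atTop (nhds (target j)) := by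
  intro SigDag Cross Mmat B D1 D2 D3 Dl Dp target
  have hlaw (i : ℕ) (k : Fin np) : HasLaw (fun ω => z i ω k) rademacher μ :=
    hasLaw_rademacher ((measurable_pi_apply k).comp (hmeas i)) (hdist i k).1 (hdist i k).2
  have htarget (j : Fin np) : target j = σ1sq + σsq - D1 j - 2 * D2 j + D3 j - B j j := by
    simp only [target, Cross, SigDag, woodbury_diag_decomposition hSs hSm Smn Smnp Snnp j]
    ring
  refine ⟨fun ℓ hℓ j => ?_, ?_⟩
  · change ∫ ω, (_ - hutchinsonDiag B z ℓ ω j) ∂μ = _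
    rw [integral_sub (integrable_const _) (integrable_hutchinsonDiag hlaw B ℓ j),
      integral_const, integral_hutchinsonDiag hindep hlaw B hℓ.ne' j, htarget]
    simp
  · filter_upwards [ae_tendsto_hutchinsonDiag hmeas hindep hlaw B] with ω hω j
    rw [htarget]
    exact (hω j).const_sub _
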